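/- Let H = (P^T | −I_{n−k}) be a generator matrix of the dual code D of a systematic [n,k] code. The star products of rows h_j, h_{j'} of H satisfy: h_j * h_j = (q_j * q_j | e_j) and, for j < j', h_j * h_{j'} = (q_j * q_{j'} | 0), where q_j is the j-th row of P^T and e_j the j-th standard basis vector of F_q^{n−k}. Consequently dim D^(2) = (n−k) + rank(M_1), where M_1 is the k × binom(n−k,2) matrix with entries p_{i,j} p_{i,j'} for 1 ≤ i ≤ k and k < j < j' ≤ n. -/

import Mathlib

open Matrix Module

open Pointwise

/-- The span of all coordinatewise (star) products of elements of `A` and `B`. -/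
def starSpan {F : Type*} [Field F] {ι : Type*} (A B : Submodule F (ι → F)) :
    Submodule F (ι → F) :=
  Submodule.span F {x | ∃ a ∈ A, ∃ b ∈ B, x = a * b}

/-- The linear system `L_P` of Faugère et al.: `k` linear equations
`∑_{j < j'} p_{ij} p_{ij'} Z_{jj'} = 0` (`1 ≤ i ≤ k`) in the `binom(m,2)` variables
`Z_{jj'}` indexed by pairs `j < j'` with `k < j < j' ≤ n`, `m = n - k`. Its kernel is
the solution space `K(L_P)`. -/
noncomputable def LPmap {F : Type*} [Field F] {k m : ℕ} (P : Matrix (Fin k) (Fin m) F) :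
    ({p : Fin m × Fin m // p.1 < p.2} → F) →ₗ[F] (Fin k → F) :=
  LinearMap.pi fun i => ∑ p : {p : Fin m × Fin m // p.1 < p.2},
    (P i p.1.1 * P i p.1.2) • LinearMap.proj p

/-- The rows of the parity check matrix `H = (Pᵀ | -I_{n-k})` of the code with systematic
generator matrix `G = (I_k | P)`; the `n` coordinates are indexed by `Fin k ⊕ Fin m` with
`m = n - k`. -/
def Hrows {F : Type*} [Field F] {k m : ℕ} (P : Matrix (Fin k) (Fin m) F) :
    Fin m → (Fin k ⊕ Fin m → F) :=
  fun r => Sum.elim (fun i => P i r) (fun s => if r = s then -1 else 0)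

/-- The `k × binom(n-k, 2)` matrix `M₁` with entries `p_{ij} p_{ij'}` for `1 ≤ i ≤ k` and
pairs `j < j'`. -/
def M1 {F : Type*} [Field F] {k m : ℕ} (P : Matrix (Fin k) (Fin m) F) :
    Matrix (Fin k) {p : Fin m × Fin m // p.1 < p.2} F :=
  fun i p => P i p.1.1 * P i p.1.2

/-! The diagonal products `h_r * h_r` restrict to the standard basis on the last `m`
coordinates, while the products `h_r * h_{r'}` with `r < r'` vanish there and are the columns of
`M₁` on the first `k`. Hence `D^(2)` is the direct sum of an `m`-dimensional space and a copy of
the column space of `M₁`. -/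

theorem starSpan_eq_mul {F ι : Type*} [Field F] (A B : Submodule F (ι → F)) :
    starSpan A B = A * B := by
  rw [starSpan, Submodule.mul_eq_span_mul_set]
  congr 1
  ext x
  simp [Set.mem_mul, eq_comm]

theorem Set.range_mul_range_eq_union {M κ : Type*} [CommMagma M] [LinearOrder κ] (h : κ → M) :
    Set.range h * Set.range h = Set.range (fun r => h r * h r) ∪
      Set.range (fun p : {p : κ × κ // p.1 < p.2} => h p.1.1 * h p.1.2) := by
  ext x
  simp only [Set.mem_mul, Set.mem_union, Set.mem_range]
  constructor
  · rintro ⟨_, ⟨r, rfl⟩, _, ⟨r', rfl⟩, rfl⟩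
    rcases lt_trichotomy r r' with hlt | rfl | hgt
    · exact Or.inr ⟨⟨(r, r'), hlt⟩, rfl⟩
    · exact Or.inl ⟨r, rfl⟩
    · exact Or.inr ⟨⟨(r', r), hgt⟩, mul_comm _ _⟩
  · rintro (⟨r, rfl⟩ | ⟨p, rfl⟩)
    · exact ⟨_, ⟨r, rfl⟩, _, ⟨r, rfl⟩, rfl⟩
    · exact ⟨_, ⟨_, rfl⟩, _, ⟨_, rfl⟩, rfl⟩

theorem Submodule.finrank_span_sup_of_linearIndependent_comp {F V W κ : Type*} [DivisionRing F]
    [AddCommGroup V] [Module F V] [AddCommGroup W] [Module F W] [FiniteDimensional F V]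
    [Fintype κ] {π : V →ₗ[F] W} {g : κ → V} (hg : LinearIndependent F (π ∘ g))
    {B : Submodule F V} (hB : B ≤ LinearMap.ker π) :
    finrank F ↥(span F (Set.range g) ⊔ B) = Fintype.card κ + finrank F B := by
  have hdisj : Disjoint (span F (Set.range g)) B :=
    (Submodule.range_ker_disjoint hg).mono_right hB
  have hsum := Submodule.finrank_sup_add_finrank_inf_eq (span F (Set.range g)) B
  rwa [hdisj.eq_bot, finrank_bot, add_zero, finrank_span_eq_card (hg.of_comp π)] at hsum

section ExtendByZero

variable {F ι κ J : Type*} [DivisionRing F] (v : J → ι → F)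

theorem span_range_sumElim_zero_le_ker :
    Submodule.span F (Set.range fun j => (Sum.elim (v j) 0 : ι ⊕ κ → F)) ≤
      LinearMap.ker (LinearMap.funLeft F F Sum.inr) := by
  rw [Submodule.span_le]
  rintro _ ⟨j, rfl⟩
  rfl

theorem finrank_span_range_sumElim_zero :
    finrank F (Submodule.span F (Set.range fun j => (Sum.elim (v j) 0 : ι ⊕ κ → F))) =
      finrank F (Submodule.span F (Set.range v)) := by
  let e : (ι → F) →ₗ[F] (ι ⊕ κ → F) :=
    (LinearEquiv.sumPiEquivProdPi F ι κ fun _ => F).symm.toLinearMap ∘ₗ LinearMap.inl F _ _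
  have he : Function.Injective e := fun w w' h => funext fun i => congrFun h (Sum.inl i)
  have hspan : Submodule.span F (Set.range fun j => (Sum.elim (v j) 0 : ι ⊕ κ → F)) =
      (Submodule.span F (Set.range v)).map e := by
    rw [Submodule.map_span, ← Set.range_comp]
    rfl
  rw [hspan, ← (Submodule.equivMapOfInjective e he _).finrank_eq]

end ExtendByZero

section Hrows

variable {F : Type*} [Field F] {k m : ℕ} (P : Matrix (Fin k) (Fin m) F)

theorem hrows_mul_self (r : Fin m) : Hrows P r * Hrows P r =
    Sum.elim (fun i => P i r * P i r) (fun s => if r = s then 1 else 0) := by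
  funext x
  cases x with
  | inl i => rfl
  | inr s =>
    simp only [Pi.mul_apply, Hrows, Sum.elim_inr]
    split_ifs <;> simp

theorem hrows_mul_of_lt {r r' : Fin m} (h : r < r') : Hrows P r * Hrows P r' =
    Sum.elim (fun i => P i r * P i r') (fun _ => 0) := by
  funext x
  cases x with
  | inl i => rfl
  | inr s =>
    simp only [Pi.mul_apply, Hrows, Sum.elim_inr]
    rcases eq_or_ne r s with rfl | hr
    · rw [if_neg h.ne', mul_zero]
    · rw [if_neg hr, zero_mul]

end Hrows

theorem stmt15_general {F : Type*} [Field F] {k m : ℕ}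
    (P : Matrix (Fin k) (Fin m) F) :
    (∀ r : Fin m, Hrows P r * Hrows P r =
        Sum.elim (fun i => P i r * P i r) (fun s => if r = s then 1 else 0)) ∧
    (∀ r r' : Fin m, r < r' → Hrows P r * Hrows P r' =
        Sum.elim (fun i => P i r * P i r') (fun _ => 0)) ∧
    Module.finrank F
        (starSpan (Submodule.span F (Set.range (Hrows P)))
          (Submodule.span F (Set.range (Hrows P)))) = m + (M1 P).rank := by
  refine ⟨hrows_mul_self P, fun r r' => hrows_mul_of_lt P, ?_⟩
  have hdiag : LinearMap.funLeft F F Sum.inr ∘ (fun r => Hrows P r * Hrows P r) =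
      Pi.basisFun F (Fin m) := by
    funext r s
    simp [LinearMap.funLeft_apply, hrows_mul_self, Pi.single_apply, eq_comm]
  have hpairs : (fun p : {p : Fin m × Fin m // p.1 < p.2} => Hrows P p.1.1 * Hrows P p.1.2) =
      fun p => Sum.elim ((M1 P).col p) 0 :=
    funext fun p => hrows_mul_of_lt P p.2
  rw [starSpan_eq_mul, Submodule.span_mul_span, Set.range_mul_range_eq_union,
    Submodule.span_union, hpairs,
    Submodule.finrank_span_sup_of_linearIndependent_comp
      (hdiag ▸ (Pi.basisFun F (Fin m)).linearIndependent) (span_range_sumElim_zero_le_ker _),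
    Fintype.card_fin, finrank_span_range_sumElim_zero, rank_eq_finrank_span_cols]

/-- For `H = (Pᵀ | -I_{n-k})` a generator matrix of the dual `D` of a systematic `[n, k]`
code: the star products of the rows `h_j` of `H` satisfy `h_j * h_j = (q_j * q_j | e_j)`
and `h_j * h_{j'} = (q_j * q_{j'} | 0)` for `j < j'`, where `q_j` is the `j`-th row of
`Pᵀ` and `e_j` the `j`-th standard basis vector; consequently
`dim D^(2) = (n - k) + rank M₁`. -/
theorem stmt15 {F : Type*} [Field F] [DecidableEq F] {k m : ℕ}
    (P : Matrix (Fin k) (Fin m) F) :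
    (∀ r : Fin m, Hrows P r * Hrows P r =
        Sum.elim (fun i => P i r * P i r) (fun s => if r = s then 1 else 0)) ∧
    (∀ r r' : Fin m, r < r' → Hrows P r * Hrows P r' =
        Sum.elim (fun i => P i r * P i r') (fun _ => 0)) ∧
    Module.finrank F
        (starSpan (Submodule.span F (Set.range (Hrows P)))
          (Submodule.span F (Set.range (Hrows P)))) = m + (M1 P).rank :=
  stmt15_general P
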